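/- arXiv:1608.04877 — 4 statements merged into one kernel-verified Lean document; each statement's English description precedes it below -/
import Mathlib

section
/- For the Case I knotted sphere X(u,v) = (x₁(u), x₂(u), cos φ(u)cos v − sin φ(u)sin v, cos φ(u)sin v + sin φ(u)cos v) with unit-speed profile curve and φ'(u)² < 1 for all u, the first fundamental form coefficients are E = 1, F = φ'(u), G = 1, and the Gaussian curvature K = −(1/(2W))·∂_u(G_u / W), with W = √(EG − F²) = √(1 − φ'²), vanishes identically; i.e., the surface is flat. -/
open Real

noncomputable def dot4 (a b : Fin 4 → ℝ) : ℝ :=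
  a 0 * b 0 + a 1 * b 1 + a 2 * b 2 + a 3 * b 3

theorem caseI_knotted_sphere_is_flat
    (x₁ x₂ x₃ x₄ : ℝ → ℝ)
    (hx₁ : ContDiff ℝ (⊤ : ℕ∞) x₁) (hx₂ : ContDiff ℝ (⊤ : ℕ∞) x₂)
    (hx₃ : ContDiff ℝ (⊤ : ℕ∞) x₃) (hx₄ : ContDiff ℝ (⊤ : ℕ∞) x₄)
    (hunit : ∀ u, deriv x₁ u ^ 2 + deriv x₂ u ^ 2 + deriv x₃ u ^ 2 + deriv x₄ u ^ 2 = 1)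
    (X : ℝ → ℝ → Fin 4 → ℝ)
    (hX : ∀ u v, X u v =
      ![x₁ u, x₂ u, x₃ u * Real.cos v - x₄ u * Real.sin v,
        x₃ u * Real.sin v + x₄ u * Real.cos v])
    (Xu Xv : ℝ → ℝ → Fin 4 → ℝ)
    (hXu : ∀ u v, Xu u v = deriv (fun t => X t v) u)
    (hXv : ∀ u v, Xv u v = deriv (fun t => X u t) v)
    (φ : ℝ → ℝ) (hφ : ContDiff ℝ (⊤ : ℕ∞) φ)
    (hx₃φ : ∀ u, x₃ u = Real.cos (φ u)) (hx₄φ : ∀ u, x₄ u = Real.sin (φ u))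
    (hφ' : ∀ u, (deriv φ u) ^ 2 < 1)
    (E F G W : ℝ → ℝ → ℝ)
    (hE : ∀ u v, E u v = dot4 (Xu u v) (Xu u v))
    (hF : ∀ u v, F u v = dot4 (Xu u v) (Xv u v))
    (hG : ∀ u v, G u v = dot4 (Xv u v) (Xv u v))
    (hW : ∀ u v, W u v = Real.sqrt (E u v * G u v - F u v ^ 2))
    (Gu : ℝ → ℝ → ℝ)
    (hGu : ∀ u v, Gu u v = deriv (fun t => G t v) u)
    (K : ℝ → ℝ → ℝ)
    (hK : ∀ u v, K u v = -(1 / (2 * W u v)) * deriv (fun t => Gu t v / W t v) u)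
    : ∀ u v,
      E u v = 1 ∧
      F u v = deriv φ u ∧
      G u v = 1 ∧
      W u v = Real.sqrt (1 - deriv φ u ^ 2) ∧
      K u v = 0 := by
  -- derivatives of the profile functions
  have hdx₁ : ∀ u, HasDerivAt x₁ (deriv x₁ u) u := fun u =>
    (hx₁.differentiable (by simp) u).hasDerivAt
  have hdx₂ : ∀ u, HasDerivAt x₂ (deriv x₂ u) u := fun u =>
    (hx₂.differentiable (by simp) u).hasDerivAt
  have hdx₃ : ∀ u, HasDerivAt x₃ (deriv x₃ u) u := fun u =>
    (hx₃.differentiable (by simp) u).hasDerivAt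
  have hdx₄ : ∀ u, HasDerivAt x₄ (deriv x₄ u) u := fun u =>
    (hx₄.differentiable (by simp) u).hasDerivAt
  have hdφ : ∀ u, HasDerivAt φ (deriv φ u) u := fun u =>
    (hφ.differentiable (by simp) u).hasDerivAt
  have hx3d : ∀ u, deriv x₃ u = -Real.sin (φ u) * deriv φ u := by
    intro u
    have hx : x₃ = fun t => Real.cos (φ t) := funext hx₃φ
    rw [hx]
    exact ((Real.hasDerivAt_cos (φ u)).comp u (hdφ u)).deriv
  have hx4d : ∀ u, deriv x₄ u = Real.cos (φ u) * deriv φ u := by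
    intro u
    have hx : x₄ = fun t => Real.sin (φ t) := funext hx₄φ
    rw [hx]
    exact ((Real.hasDerivAt_sin (φ u)).comp u (hdφ u)).deriv
  -- Xu
  have hXu' : ∀ u v, Xu u v = ![deriv x₁ u, deriv x₂ u,
      deriv x₃ u * Real.cos v - deriv x₄ u * Real.sin v,
      deriv x₃ u * Real.sin v + deriv x₄ u * Real.cos v] := by
    intro u v
    rw [hXu]
    have h1 : (fun t => X t v) = fun t =>
        (![x₁ t, x₂ t, x₃ t * Real.cos v - x₄ t * Real.sin v,
          x₃ t * Real.sin v + x₄ t * Real.cos v] : Fin 4 → ℝ) :=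
      funext fun t => hX t v
    rw [h1]
    have h2 : HasDerivAt (fun t =>
        (![x₁ t, x₂ t, x₃ t * Real.cos v - x₄ t * Real.sin v,
          x₃ t * Real.sin v + x₄ t * Real.cos v] : Fin 4 → ℝ))
        (![deriv x₁ u, deriv x₂ u,
          deriv x₃ u * Real.cos v - deriv x₄ u * Real.sin v,
          deriv x₃ u * Real.sin v + deriv x₄ u * Real.cos v]) u := by
      rw [hasDerivAt_pi]
      intro i
      fin_cases i <;> simp only [Matrix.cons_val_zero, Matrix.cons_val_one, Matrix.head_cons,
        Matrix.cons_val_two, Matrix.tail_cons, Matrix.cons_val_three, Matrix.cons_val', Fin.mk_zero,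
        Fin.mk_one, Matrix.cons_val_fin_one, Matrix.empty_val']
      · exact hdx₁ u
      · exact hdx₂ u
      · exact ((hdx₃ u).mul_const _).sub ((hdx₄ u).mul_const _)
      · exact ((hdx₃ u).mul_const _).add ((hdx₄ u).mul_const _)
    exact h2.deriv
  -- Xv
  have hXv' : ∀ u v, Xv u v = ![0, 0,
      x₃ u * -Real.sin v - x₄ u * Real.cos v,
      x₃ u * Real.cos v + x₄ u * -Real.sin v] := by
    intro u v
    rw [hXv]
    have h1 : (fun t => X u t) = fun t =>
        (![x₁ u, x₂ u, x₃ u * Real.cos t - x₄ u * Real.sin t,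
          x₃ u * Real.sin t + x₄ u * Real.cos t] : Fin 4 → ℝ) :=
      funext fun t => hX u t
    rw [h1]
    have h2 : HasDerivAt (fun t =>
        (![x₁ u, x₂ u, x₃ u * Real.cos t - x₄ u * Real.sin t,
          x₃ u * Real.sin t + x₄ u * Real.cos t] : Fin 4 → ℝ))
        (![0, 0, x₃ u * -Real.sin v - x₄ u * Real.cos v,
          x₃ u * Real.cos v + x₄ u * -Real.sin v]) v := by
      rw [hasDerivAt_pi]
      intro i
      fin_cases i <;> simp only [Matrix.cons_val_zero, Matrix.cons_val_one, Matrix.head_cons,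
        Matrix.cons_val_two, Matrix.tail_cons, Matrix.cons_val_three, Matrix.cons_val', Fin.mk_zero,
        Fin.mk_one, Matrix.cons_val_fin_one, Matrix.empty_val']
      · exact hasDerivAt_const v _
      · exact hasDerivAt_const v _
      · exact ((Real.hasDerivAt_cos v).const_mul (x₃ u)).sub
          ((Real.hasDerivAt_sin v).const_mul (x₄ u))
      · exact ((Real.hasDerivAt_sin v).const_mul (x₃ u)).add
          ((Real.hasDerivAt_cos v).const_mul (x₄ u))
    exact h2.deriv
  have hsc : ∀ u, Real.sin (φ u) ^ 2 + Real.cos (φ u) ^ 2 = 1 := fun u =>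
    Real.sin_sq_add_cos_sq (φ u)
  have hscv : ∀ v : ℝ, Real.sin v ^ 2 + Real.cos v ^ 2 = 1 := fun v =>
    Real.sin_sq_add_cos_sq v
  have hE1 : ∀ u v, E u v = 1 := by
    intro u v
    rw [hE, hXu']
    simp only [dot4, Matrix.cons_val_zero, Matrix.cons_val_one, Matrix.head_cons,
      Matrix.cons_val_two, Matrix.tail_cons, Matrix.cons_val_three]
    linear_combination (deriv x₃ u ^ 2 + deriv x₄ u ^ 2) * hscv v + hunit u
  have hF1 : ∀ u v, F u v = deriv φ u := by
    intro u v
    rw [hF, hXu', hXv']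
    simp only [dot4, Matrix.cons_val_zero, Matrix.cons_val_one, Matrix.head_cons,
      Matrix.cons_val_two, Matrix.tail_cons, Matrix.cons_val_three]
    rw [hx3d, hx4d, hx₃φ, hx₄φ]
    linear_combination (deriv φ u * Real.sin v ^ 2 + deriv φ u * Real.cos v ^ 2) * hsc u
      + deriv φ u * hscv v
  have hG1 : ∀ u v, G u v = 1 := by
    intro u v
    rw [hG, hXv']
    simp only [dot4, Matrix.cons_val_zero, Matrix.cons_val_one, Matrix.head_cons,
      Matrix.cons_val_two, Matrix.tail_cons, Matrix.cons_val_three]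
    rw [hx₃φ, hx₄φ]
    linear_combination (Real.sin v ^ 2 + Real.cos v ^ 2) * hsc u + hscv v
  have hW1 : ∀ u v, W u v = Real.sqrt (1 - deriv φ u ^ 2) := by
    intro u v
    rw [hW, hE1, hF1, hG1]
    ring_nf
  have hGu0 : ∀ u v, Gu u v = 0 := by
    intro u v
    rw [hGu]
    have : (fun t => G t v) = fun _ => (1 : ℝ) := funext fun t => hG1 t v
    rw [this, deriv_const]
  intro u v
  refine ⟨hE1 u v, hF1 u v, hG1 u v, hW1 u v, ?_⟩
  rw [hK]
  have : (fun t => Gu t v / W t v) = fun _ => (0 : ℝ) := by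
    funext t; rw [hGu0]; simp
  rw [this, deriv_const]
  ring
end

section
/- For the Case I knotted sphere with unit-speed profile curve and φ'(u)² < 1 for all u, the squared mean curvature satisfies, at every point, ‖H⃗‖² = (1/(4(1 − φ'²)²))·( κ_γ² + 1 − 2φ'² − φ''²/(1 − φ'²) ), where κ_γ² = x₁''² + x₂''² + x₃''² + x₄''² is the squared curvature of the unit-speed profile curve γ. -/
open Real

theorem hasDerivAt_vec4 {f1 f2 f3 f4 : ℝ → ℝ} {d1 d2 d3 d4 : ℝ} {t : ℝ}
    (h1 : HasDerivAt f1 d1 t) (h2 : HasDerivAt f2 d2 t)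
    (h3 : HasDerivAt f3 d3 t) (h4 : HasDerivAt f4 d4 t) :
    HasDerivAt (fun s => (![f1 s, f2 s, f3 s, f4 s] : Fin 4 → ℝ))
      ![d1, d2, d3, d4] t := by
  rw [hasDerivAt_pi]
  intro i
  fin_cases i <;> simpa

theorem deriv_of_smooth {f : ℝ → ℝ} (hf : ContDiff ℝ (⊤ : ℕ∞) f) :
    Differentiable ℝ (deriv f) := by
  have h : ContDiff ℝ ((⊤ : ℕ∞) : WithTop ℕ∞) f := hf.of_le (by simp)
  exact ((contDiff_infty_iff_deriv.mp h).2).differentiable (by simp)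

theorem caseI_knotted_sphere_mean_curvature_norm
    (x₁ x₂ x₃ x₄ : ℝ → ℝ)
    (hx₁ : ContDiff ℝ (⊤ : ℕ∞) x₁) (hx₂ : ContDiff ℝ (⊤ : ℕ∞) x₂)
    (hx₃ : ContDiff ℝ (⊤ : ℕ∞) x₃) (hx₄ : ContDiff ℝ (⊤ : ℕ∞) x₄)
    (hunit : ∀ u, deriv x₁ u ^ 2 + deriv x₂ u ^ 2 + deriv x₃ u ^ 2 + deriv x₄ u ^ 2 = 1)
    (X : ℝ → ℝ → Fin 4 → ℝ)
    (hX : ∀ u v, X u v =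
      ![x₁ u, x₂ u, x₃ u * Real.cos v - x₄ u * Real.sin v,
        x₃ u * Real.sin v + x₄ u * Real.cos v])
    (Xu Xv : ℝ → ℝ → Fin 4 → ℝ)
    (hXu : ∀ u v, Xu u v = deriv (fun t => X t v) u)
    (hXv : ∀ u v, Xv u v = deriv (fun t => X u t) v)
    (φ : ℝ → ℝ) (hφ : ContDiff ℝ (⊤ : ℕ∞) φ)
    (hx₃φ : ∀ u, x₃ u = Real.cos (φ u)) (hx₄φ : ∀ u, x₄ u = Real.sin (φ u))
    (hφ' : ∀ u, (deriv φ u) ^ 2 < 1)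
    (Xuu Xuv Xvv : ℝ → ℝ → Fin 4 → ℝ)
    (hXuu : ∀ u v, Xuu u v = deriv (fun t => Xu t v) u)
    (hXuv : ∀ u v, Xuv u v = deriv (fun t => Xu u t) v)
    (hXvv : ∀ u v, Xvv u v = deriv (fun t => Xv u t) v)
    (E F G W : ℝ → ℝ → ℝ)
    (hE : ∀ u v, E u v = dot4 (Xu u v) (Xu u v))
    (hF : ∀ u v, F u v = dot4 (Xu u v) (Xv u v))
    (hG : ∀ u v, G u v = dot4 (Xv u v) (Xv u v))
    (hW : ∀ u v, W u v = Real.sqrt (E u v * G u v - F u v ^ 2))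
    (Fu Gu : ℝ → ℝ → ℝ)
    (hFu : ∀ u v, Fu u v = deriv (fun t => F t v) u)
    (hGu : ∀ u v, Gu u v = deriv (fun t => G t v) u)
    (huu huv hvv : ℝ → ℝ → Fin 4 → ℝ)
    (hhuu : ∀ u v, huu u v = Xuu u v + (F u v * Fu u v / W u v ^ 2) • Xu u v
        - (Fu u v / W u v ^ 2) • Xv u v)
    (hhuv : ∀ u v, huv u v = Xuv u v + (F u v * Gu u v / (2 * W u v ^ 2)) • Xu u v
        - (Gu u v / (2 * W u v ^ 2)) • Xv u v)
    (hhvv : ∀ u v, hvv u v = Xvv u v + (G u v * Gu u v / (2 * W u v ^ 2)) • Xu u v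
        - (F u v * Gu u v / (2 * W u v ^ 2)) • Xv u v)
    (H : ℝ → ℝ → Fin 4 → ℝ)
    (hH : ∀ u v, H u v = (1 / (2 * W u v ^ 2)) •
        (E u v • hvv u v - (2 * F u v) • huv u v + G u v • huu u v))
    : ∀ u v,
      dot4 (H u v) (H u v) =
        (1 / (4 * (1 - deriv φ u ^ 2) ^ 2)) *
          ((deriv (deriv x₁) u ^ 2 + deriv (deriv x₂) u ^ 2 +
              deriv (deriv x₃) u ^ 2 + deriv (deriv x₄) u ^ 2)
            + 1 - 2 * deriv φ u ^ 2
            - deriv (deriv φ) u ^ 2 / (1 - deriv φ u ^ 2)) := by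
  intro u v
  -- basic differentiability
  have hφd : ∀ t, HasDerivAt φ (deriv φ t) t :=
    fun t => ((hφ.differentiable (by simp)) t).hasDerivAt
  have hφ'd : ∀ t, HasDerivAt (deriv φ) (deriv (deriv φ) t) t :=
    fun t => ((deriv_of_smooth hφ) t).hasDerivAt
  have hx₁d : ∀ t, HasDerivAt x₁ (deriv x₁ t) t :=
    fun t => ((hx₁.differentiable (by simp)) t).hasDerivAt
  have hx₂d : ∀ t, HasDerivAt x₂ (deriv x₂ t) t :=
    fun t => ((hx₂.differentiable (by simp)) t).hasDerivAt
  have hx₃d : ∀ t, HasDerivAt x₃ (deriv x₃ t) t :=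
    fun t => ((hx₃.differentiable (by simp)) t).hasDerivAt
  have hx₄d : ∀ t, HasDerivAt x₄ (deriv x₄ t) t :=
    fun t => ((hx₄.differentiable (by simp)) t).hasDerivAt
  have hx₁'d : ∀ t, HasDerivAt (deriv x₁) (deriv (deriv x₁) t) t :=
    fun t => ((deriv_of_smooth hx₁) t).hasDerivAt
  have hx₂'d : ∀ t, HasDerivAt (deriv x₂) (deriv (deriv x₂) t) t :=
    fun t => ((deriv_of_smooth hx₂) t).hasDerivAt
  have hx₃'d : ∀ t, HasDerivAt (deriv x₃) (deriv (deriv x₃) t) t :=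
    fun t => ((deriv_of_smooth hx₃) t).hasDerivAt
  have hx₄'d : ∀ t, HasDerivAt (deriv x₄) (deriv (deriv x₄) t) t :=
    fun t => ((deriv_of_smooth hx₄) t).hasDerivAt
  -- derivative formulas for x₃, x₄
  have hx₃f : x₃ = fun t => Real.cos (φ t) := funext hx₃φ
  have hx₄f : x₄ = fun t => Real.sin (φ t) := funext hx₄φ
  have hdx₃v : ∀ t, deriv x₃ t = -Real.sin (φ t) * deriv φ t := by
    intro t
    rw [hx₃f]
    exact ((hφd t).cos).deriv
  have hdx₄v : ∀ t, deriv x₄ t = Real.cos (φ t) * deriv φ t := by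
    intro t
    rw [hx₄f]
    exact ((hφd t).sin).deriv
  have hddx₃v : ∀ t, deriv (deriv x₃) t
      = -(Real.cos (φ t) * deriv φ t) * deriv φ t + -Real.sin (φ t) * deriv (deriv φ) t := by
    intro t
    have hfe : deriv x₃ = fun s => -Real.sin (φ s) * deriv φ s := funext hdx₃v
    rw [hfe]
    exact (((hφd t).sin.neg).mul (hφ'd t)).deriv
  have hddx₄v : ∀ t, deriv (deriv x₄) t
      = -Real.sin (φ t) * deriv φ t * deriv φ t + Real.cos (φ t) * deriv (deriv φ) t := by
    intro t
    have hfe : deriv x₄ = fun s => Real.cos (φ s) * deriv φ s := funext hdx₄v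
    rw [hfe]
    exact (((hφd t).cos).mul (hφ'd t)).deriv
  -- differentiated unit-speed relation
  have hsum : ∀ t, deriv x₁ t * deriv (deriv x₁) t + deriv x₂ t * deriv (deriv x₂) t
      + deriv x₃ t * deriv (deriv x₃) t + deriv x₄ t * deriv (deriv x₄) t = 0 := by
    intro t
    have hder : HasDerivAt
        (fun s => deriv x₁ s ^ 2 + deriv x₂ s ^ 2 + deriv x₃ s ^ 2 + deriv x₄ s ^ 2)
        (((2 : ℕ) * deriv x₁ t ^ 1 * deriv (deriv x₁) t
          + (2 : ℕ) * deriv x₂ t ^ 1 * deriv (deriv x₂) t)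
          + (2 : ℕ) * deriv x₃ t ^ 1 * deriv (deriv x₃) t
          + (2 : ℕ) * deriv x₄ t ^ 1 * deriv (deriv x₄) t) t :=
      ((((hx₁'d t).pow 2).add ((hx₂'d t).pow 2)).add ((hx₃'d t).pow 2)).add ((hx₄'d t).pow 2)
    have hconst : (fun s => deriv x₁ s ^ 2 + deriv x₂ s ^ 2 + deriv x₃ s ^ 2 + deriv x₄ s ^ 2)
        = fun _ => (1 : ℝ) := funext hunit
    rw [hconst] at hder
    have h0 := hder.unique (hasDerivAt_const t 1)
    push_cast at h0
    nlinarith [h0]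
  -- explicit first derivatives of X
  have hXud : ∀ t w, Xu t w = ![deriv x₁ t, deriv x₂ t,
      deriv x₃ t * Real.cos w - deriv x₄ t * Real.sin w,
      deriv x₃ t * Real.sin w + deriv x₄ t * Real.cos w] := by
    intro t w
    rw [hXu]
    have hfun : (fun s => X s w) = fun s => ![x₁ s, x₂ s,
        x₃ s * Real.cos w - x₄ s * Real.sin w,
        x₃ s * Real.sin w + x₄ s * Real.cos w] := funext fun s => hX s w
    rw [hfun]
    exact (hasDerivAt_vec4 (hx₁d t) (hx₂d t)
      (((hx₃d t).mul_const _).sub ((hx₄d t).mul_const _))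
      (((hx₃d t).mul_const _).add ((hx₄d t).mul_const _))).deriv
  have hXvd : ∀ t w, Xv t w = ![0, 0,
      x₃ t * -Real.sin w - x₄ t * Real.cos w,
      x₃ t * Real.cos w + x₄ t * -Real.sin w] := by
    intro t w
    rw [hXv]
    have hfun : (fun s => X t s) = fun s => ![x₁ t, x₂ t,
        x₃ t * Real.cos s - x₄ t * Real.sin s,
        x₃ t * Real.sin s + x₄ t * Real.cos s] := funext fun s => hX t s
    rw [hfun]
    exact (hasDerivAt_vec4 (hasDerivAt_const _ _) (hasDerivAt_const _ _)
      (((Real.hasDerivAt_cos w).const_mul (x₃ t)).sub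
        ((Real.hasDerivAt_sin w).const_mul (x₄ t)))
      (((Real.hasDerivAt_sin w).const_mul (x₃ t)).add
        ((Real.hasDerivAt_cos w).const_mul (x₄ t)))).deriv
  -- second derivatives of X
  have hXuud : Xuu u v = ![deriv (deriv x₁) u, deriv (deriv x₂) u,
      deriv (deriv x₃) u * Real.cos v - deriv (deriv x₄) u * Real.sin v,
      deriv (deriv x₃) u * Real.sin v + deriv (deriv x₄) u * Real.cos v] := by
    rw [hXuu]
    have hfun : (fun t => Xu t v) = fun t => ![deriv x₁ t, deriv x₂ t,
        deriv x₃ t * Real.cos v - deriv x₄ t * Real.sin v,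
        deriv x₃ t * Real.sin v + deriv x₄ t * Real.cos v] := funext fun t => hXud t v
    rw [hfun]
    exact (hasDerivAt_vec4 (hx₁'d u) (hx₂'d u)
      (((hx₃'d u).mul_const _).sub ((hx₄'d u).mul_const _))
      (((hx₃'d u).mul_const _).add ((hx₄'d u).mul_const _))).deriv
  have hXuvd : Xuv u v = ![0, 0,
      deriv x₃ u * -Real.sin v - deriv x₄ u * Real.cos v,
      deriv x₃ u * Real.cos v + deriv x₄ u * -Real.sin v] := by
    rw [hXuv]
    have hfun : (fun s => Xu u s) = fun s => ![deriv x₁ u, deriv x₂ u,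
        deriv x₃ u * Real.cos s - deriv x₄ u * Real.sin s,
        deriv x₃ u * Real.sin s + deriv x₄ u * Real.cos s] := funext fun s => hXud u s
    rw [hfun]
    exact (hasDerivAt_vec4 (hasDerivAt_const _ _) (hasDerivAt_const _ _)
      (((Real.hasDerivAt_cos v).const_mul (deriv x₃ u)).sub
        ((Real.hasDerivAt_sin v).const_mul (deriv x₄ u)))
      (((Real.hasDerivAt_sin v).const_mul (deriv x₃ u)).add
        ((Real.hasDerivAt_cos v).const_mul (deriv x₄ u)))).deriv
  have hXvvd : Xvv u v = ![0, 0,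
      x₃ u * -Real.cos v - x₄ u * -Real.sin v,
      x₃ u * -Real.sin v + x₄ u * -Real.cos v] := by
    rw [hXvv]
    have hfun : (fun s => Xv u s) = fun s => ![0, 0,
        x₃ u * -Real.sin s - x₄ u * Real.cos s,
        x₃ u * Real.cos s + x₄ u * -Real.sin s] := funext fun s => hXvd u s
    rw [hfun]
    exact (hasDerivAt_vec4 (hasDerivAt_const _ _) (hasDerivAt_const _ _)
      ((((Real.hasDerivAt_sin v).neg).const_mul (x₃ u)).sub
        ((Real.hasDerivAt_cos v).const_mul (x₄ u)))
      (((Real.hasDerivAt_cos v).const_mul (x₃ u)).add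
        (((Real.hasDerivAt_sin v).neg).const_mul (x₄ u)))).deriv
  -- fundamental form values
  have hEv : ∀ t w, E t w = 1 := by
    intro t w
    rw [hE, hXud]
    simp only [dot4, Matrix.cons_val_zero, Matrix.cons_val_one, Matrix.head_cons,
      Matrix.cons_val_two, Matrix.tail_cons, Matrix.cons_val_three]
    linear_combination hunit t
      + (deriv x₃ t ^ 2 + deriv x₄ t ^ 2) * Real.sin_sq_add_cos_sq w
  have hFv : ∀ t w, F t w = deriv φ t := by
    intro t w
    rw [hF, hXud, hXvd]
    simp only [dot4, Matrix.cons_val_zero, Matrix.cons_val_one, Matrix.head_cons,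
      Matrix.cons_val_two, Matrix.tail_cons, Matrix.cons_val_three]
    rw [hdx₃v, hdx₄v, hx₃φ, hx₄φ]
    linear_combination (deriv φ t * (Real.sin (φ t) ^ 2 + Real.cos (φ t) ^ 2))
        * Real.sin_sq_add_cos_sq w
      + deriv φ t * Real.sin_sq_add_cos_sq (φ t)
  have hGv : ∀ t w, G t w = 1 := by
    intro t w
    rw [hG, hXvd]
    simp only [dot4, Matrix.cons_val_zero, Matrix.cons_val_one, Matrix.head_cons,
      Matrix.cons_val_two, Matrix.tail_cons, Matrix.cons_val_three]
    rw [hx₃φ, hx₄φ]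
    linear_combination (Real.sin (φ t) ^ 2 + Real.cos (φ t) ^ 2)
        * Real.sin_sq_add_cos_sq w
      + Real.sin_sq_add_cos_sq (φ t)
  have hFuv : Fu u v = deriv (deriv φ) u := by
    rw [hFu]
    have hfe : (fun t => F t v) = deriv φ := funext fun t => hFv t v
    rw [hfe]
  have hGuv : Gu u v = 0 := by
    rw [hGu]
    have hfe : (fun t => G t v) = fun _ => (1 : ℝ) := funext fun t => hGv t v
    rw [hfe]
    exact deriv_const _ _
  have hwpos : 0 < 1 - deriv φ u ^ 2 := by nlinarith [hφ' u]
  have hW2 : W u v ^ 2 = 1 - deriv φ u ^ 2 := by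
    rw [hW, hEv, hGv, hFv, Real.sq_sqrt (by nlinarith [hφ' u])]
    ring
  have hwne : (1 - deriv φ u ^ 2) ≠ 0 := ne_of_gt hwpos
  have hH0 : H u v 0 = (deriv (deriv x₁) u * (1 - deriv φ u ^ 2)
      + deriv φ u * deriv (deriv φ) u * deriv x₁ u) / (2 * (1 - deriv φ u ^ 2) ^ 2) := by
    rw [hH, hhuu, hhuv, hhvv, hXuud, hXuvd, hXvvd, hXud, hXvd, hEv, hFv, hGv, hFuv, hGuv, hW2]
    simp only [Pi.smul_apply, Pi.add_apply, Pi.sub_apply, smul_eq_mul,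
      Matrix.cons_val_zero]
    field_simp
    ring_nf
  have hH1 : H u v 1 = (deriv (deriv x₂) u * (1 - deriv φ u ^ 2)
      + deriv φ u * deriv (deriv φ) u * deriv x₂ u) / (2 * (1 - deriv φ u ^ 2) ^ 2) := by
    rw [hH, hhuu, hhuv, hhvv, hXuud, hXuvd, hXvvd, hXud, hXvd, hEv, hFv, hGv, hFuv, hGuv, hW2]
    simp only [Pi.smul_apply, Pi.add_apply, Pi.sub_apply, smul_eq_mul,
      Matrix.cons_val_one, Matrix.head_cons, Matrix.cons_val_zero]
    field_simp
    ring_nf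
  have hH2 : H u v 2 = -(Real.cos (φ u) * Real.cos v - Real.sin (φ u) * Real.sin v) / 2 := by
    rw [hH, hhuu, hhuv, hhvv, hXuud, hXuvd, hXvvd, hXud, hXvd, hEv, hFv, hGv, hFuv, hGuv, hW2]
    simp only [Pi.smul_apply, Pi.add_apply, Pi.sub_apply, smul_eq_mul,
      Matrix.cons_val_two, Matrix.tail_cons, Matrix.head_cons, Matrix.cons_val_one]
    rw [hdx₃v, hdx₄v, hddx₃v, hddx₄v, hx₃φ, hx₄φ]
    field_simp
    ring
  have hH3 : H u v 3 = -(Real.cos (φ u) * Real.sin v + Real.sin (φ u) * Real.cos v) / 2 := by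
    rw [hH, hhuu, hhuv, hhvv, hXuud, hXuvd, hXvvd, hXud, hXvd, hEv, hFv, hGv, hFuv, hGuv, hW2]
    simp only [Pi.smul_apply, Pi.add_apply, Pi.sub_apply, smul_eq_mul,
      Matrix.cons_val_three, Matrix.tail_cons, Matrix.head_cons]
    rw [hdx₃v, hdx₄v, hddx₃v, hddx₄v, hx₃φ, hx₄φ]
    field_simp
    ring
  have hP : deriv x₁ u ^ 2 + deriv x₂ u ^ 2 = 1 - deriv φ u ^ 2 := by
    have h := hunit u
    rw [hdx₃v, hdx₄v] at h
    linear_combination h - deriv φ u ^ 2 * Real.sin_sq_add_cos_sq (φ u)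
  have hQ : deriv x₁ u * deriv (deriv x₁) u + deriv x₂ u * deriv (deriv x₂) u
      = -(deriv φ u * deriv (deriv φ) u) := by
    have h := hsum u
    rw [hdx₃v, hdx₄v, hddx₃v, hddx₄v] at h
    linear_combination h - deriv φ u * deriv (deriv φ) u * Real.sin_sq_add_cos_sq (φ u)
  have hdd : deriv (deriv x₃) u ^ 2 + deriv (deriv x₄) u ^ 2
      = deriv φ u ^ 4 + deriv (deriv φ) u ^ 2 := by
    rw [hddx₃v, hddx₄v]
    linear_combination (deriv φ u ^ 4 + deriv (deriv φ) u ^ 2) * Real.sin_sq_add_cos_sq (φ u)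
  have htrig : Real.cos (φ u) ^ 2 + Real.sin (φ u) ^ 2 = 1 := by
    linear_combination Real.sin_sq_add_cos_sq (φ u)
  have htrigv : Real.cos v ^ 2 + Real.sin v ^ 2 = 1 := by
    linear_combination Real.sin_sq_add_cos_sq v
  show H u v 0 * H u v 0 + H u v 1 * H u v 1 + H u v 2 * H u v 2 + H u v 3 * H u v 3 = _
  rw [hH0, hH1, hH2, hH3]
  field_simp
  linear_combination
      (4 : ℝ) *
        (2 * deriv φ u * deriv (deriv φ) u * (1 - deriv φ u ^ 2) * hQ
          + deriv φ u ^ 2 * deriv (deriv φ) u ^ 2 * hP)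
    + 4 * (1 - deriv φ u ^ 2) ^ 4 * (Real.cos (φ u) ^ 2 + Real.sin (φ u) ^ 2) * htrigv
    + 4 * (1 - deriv φ u ^ 2) ^ 4 * htrig
    - 4 * (1 - deriv φ u ^ 2) ^ 2 * hdd
end

section
/- For the Case I knotted sphere with unit-speed profile curve, φ non-constant and φ'(u)² < 1 for all u, the coordinates (u,v) cannot be conjugate: there exists a point (u,v) at which X_uv does not lie in the real span of X_u and X_v. -/
open Real

theorem caseI_coordinates_not_conjugate
    (x₁ x₂ x₃ x₄ : ℝ → ℝ)
    (hx₁ : ContDiff ℝ (⊤ : ℕ∞) x₁) (hx₂ : ContDiff ℝ (⊤ : ℕ∞) x₂)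
    (hx₃ : ContDiff ℝ (⊤ : ℕ∞) x₃) (hx₄ : ContDiff ℝ (⊤ : ℕ∞) x₄)
    (hunit : ∀ u, deriv x₁ u ^ 2 + deriv x₂ u ^ 2 + deriv x₃ u ^ 2 + deriv x₄ u ^ 2 = 1)
    (X : ℝ → ℝ → Fin 4 → ℝ)
    (hX : ∀ u v, X u v =
      ![x₁ u, x₂ u, x₃ u * Real.cos v - x₄ u * Real.sin v,
        x₃ u * Real.sin v + x₄ u * Real.cos v])
    (Xu Xv : ℝ → ℝ → Fin 4 → ℝ)
    (hXu : ∀ u v, Xu u v = deriv (fun t => X t v) u)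
    (hXv : ∀ u v, Xv u v = deriv (fun t => X u t) v)
    (φ : ℝ → ℝ) (hφ : ContDiff ℝ (⊤ : ℕ∞) φ)
    (hx₃φ : ∀ u, x₃ u = Real.cos (φ u)) (hx₄φ : ∀ u, x₄ u = Real.sin (φ u))
    (hφ' : ∀ u, (deriv φ u) ^ 2 < 1)
    (hnc : ∃ a b, φ a ≠ φ b)
    (Xuv : ℝ → ℝ → Fin 4 → ℝ)
    (hXuv : ∀ u v, Xuv u v = deriv (fun t => Xu u t) v)
    : ∃ u v, ∀ a b : ℝ, Xuv u v ≠ a • Xu u v + b • Xv u v := by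
  -- find a point where deriv φ ≠ 0
  obtain ⟨u₀, hp⟩ : ∃ u, deriv φ u ≠ 0 := by
    by_contra h
    push_neg at h
    obtain ⟨a, b, hab⟩ := hnc
    exact hab (is_const_of_deriv_eq_zero (hφ.differentiable (by simp)) h a b)
  -- derivatives of x₃, x₄
  have hφd : ∀ u, HasDerivAt φ (deriv φ u) u :=
    fun u => ((hφ.differentiable (by simp)) u).hasDerivAt
  have hd3 : ∀ u, HasDerivAt x₃ (-Real.sin (φ u) * deriv φ u) u := by
    intro u
    have : HasDerivAt (fun t => Real.cos (φ t)) (-Real.sin (φ u) * deriv φ u) u :=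
      (Real.hasDerivAt_cos (φ u)).comp u (hφd u)
    exact this.congr_of_eventuallyEq (Filter.Eventually.of_forall fun t => (hx₃φ t))
  have hd4 : ∀ u, HasDerivAt x₄ (Real.cos (φ u) * deriv φ u) u := by
    intro u
    have : HasDerivAt (fun t => Real.sin (φ t)) (Real.cos (φ u) * deriv φ u) u :=
      (Real.hasDerivAt_sin (φ u)).comp u (hφd u)
    exact this.congr_of_eventuallyEq (Filter.Eventually.of_forall fun t => (hx₄φ t))
  have hd1 : ∀ u, HasDerivAt x₁ (deriv x₁ u) u :=
    fun u => ((hx₁.differentiable (by simp)) u).hasDerivAt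
  have hd2 : ∀ u, HasDerivAt x₂ (deriv x₂ u) u :=
    fun u => ((hx₂.differentiable (by simp)) u).hasDerivAt
  -- formula for Xu
  have hXuF : ∀ u v, Xu u v =
      ![deriv x₁ u, deriv x₂ u,
        deriv x₃ u * Real.cos v - deriv x₄ u * Real.sin v,
        deriv x₃ u * Real.sin v + deriv x₄ u * Real.cos v] := by
    intro u v
    rw [hXu]
    have h : HasDerivAt (fun t => X t v)
        (![deriv x₁ u, deriv x₂ u,
          deriv x₃ u * Real.cos v - deriv x₄ u * Real.sin v,
          deriv x₃ u * Real.sin v + deriv x₄ u * Real.cos v]) u := by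
      have heq : (fun t => X t v) = fun t =>
          ![x₁ t, x₂ t, x₃ t * Real.cos v - x₄ t * Real.sin v,
            x₃ t * Real.sin v + x₄ t * Real.cos v] := funext fun t => hX t v
      rw [heq]
      rw [hasDerivAt_pi]
      intro i
      fin_cases i
      · simpa using hd1 u
      · simpa using hd2 u
      · simpa [Pi.sub_def, Pi.add_def] using (((hx₃.differentiable (by simp) u).hasDerivAt.mul_const (Real.cos v)).sub
          ((hx₄.differentiable (by simp) u).hasDerivAt.mul_const (Real.sin v)))
      · simpa [Pi.sub_def, Pi.add_def] using (((hx₃.differentiable (by simp) u).hasDerivAt.mul_const (Real.sin v)).add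
          ((hx₄.differentiable (by simp) u).hasDerivAt.mul_const (Real.cos v)))
    exact h.deriv
  set v₀ : ℝ := -φ u₀ with hv₀
  refine ⟨u₀, v₀, ?_⟩
  set s := Real.sin (φ u₀) with hs
  set c := Real.cos (φ u₀) with hc
  set p := deriv φ u₀ with hpdef
  have hcos : Real.cos v₀ = c := by rw [hv₀, Real.cos_neg]
  have hsin : Real.sin v₀ = -s := by rw [hv₀, Real.sin_neg]
  have hd3u : deriv x₃ u₀ = -s * p := (hd3 u₀).deriv
  have hd4u : deriv x₄ u₀ = c * p := (hd4 u₀).deriv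
  -- component 2 of Xu at (u₀, v₀) is 0
  have hXu2 : Xu u₀ v₀ 2 = 0 := by
    rw [hXuF]
    simp only [Matrix.cons_val_two, Matrix.tail_cons, Matrix.head_cons]
    rw [hd3u, hd4u, hcos, hsin]
    ring
  -- component 2 of Xv at (u₀, v₀) is 0
  have hXv2 : Xv u₀ v₀ 2 = 0 := by
    rw [hXv]
    have h : HasDerivAt (fun t => X u₀ t)
        (![0, 0, -(x₃ u₀) * Real.sin v₀ - x₄ u₀ * Real.cos v₀,
          x₃ u₀ * Real.cos v₀ - x₄ u₀ * Real.sin v₀]) v₀ := by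
      have heq : (fun t => X u₀ t) = fun t =>
          ![x₁ u₀, x₂ u₀, x₃ u₀ * Real.cos t - x₄ u₀ * Real.sin t,
            x₃ u₀ * Real.sin t + x₄ u₀ * Real.cos t] := funext fun t => hX u₀ t
      rw [heq, hasDerivAt_pi]
      intro i
      fin_cases i
      · simpa using hasDerivAt_const v₀ (x₁ u₀)
      · simpa using hasDerivAt_const v₀ (x₂ u₀)
      · have := (((Real.hasDerivAt_cos v₀).const_mul (x₃ u₀)).sub
          ((Real.hasDerivAt_sin v₀).const_mul (x₄ u₀)))
        simpa [mul_comm, sub_eq_add_neg, Pi.add_def, Pi.neg_def] using this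
      · have := (((Real.hasDerivAt_sin v₀).const_mul (x₃ u₀)).add
          ((Real.hasDerivAt_cos v₀).const_mul (x₄ u₀)))
        simpa [mul_comm, sub_eq_add_neg, Pi.add_def, Pi.neg_def] using this
    rw [h.deriv]
    simp only [Matrix.cons_val_two, Matrix.tail_cons, Matrix.head_cons]
    rw [hx₃φ, hx₄φ, hcos, hsin, ← hs, ← hc]
    ring
  -- component 2 of Xuv at (u₀, v₀) is -p
  have hXuv2 : Xuv u₀ v₀ 2 = -p := by
    rw [hXuv]
    have h : HasDerivAt (fun t => Xu u₀ t)
        (![0, 0, -(deriv x₃ u₀) * Real.sin v₀ - deriv x₄ u₀ * Real.cos v₀,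
          deriv x₃ u₀ * Real.cos v₀ - deriv x₄ u₀ * Real.sin v₀]) v₀ := by
      have heq : (fun t => Xu u₀ t) = fun t =>
          ![deriv x₁ u₀, deriv x₂ u₀,
            deriv x₃ u₀ * Real.cos t - deriv x₄ u₀ * Real.sin t,
            deriv x₃ u₀ * Real.sin t + deriv x₄ u₀ * Real.cos t] :=
        funext fun t => hXuF u₀ t
      rw [heq, hasDerivAt_pi]
      intro i
      fin_cases i
      · simpa using hasDerivAt_const v₀ (deriv x₁ u₀)
      · simpa using hasDerivAt_const v₀ (deriv x₂ u₀)
      · have := (((Real.hasDerivAt_cos v₀).const_mul (deriv x₃ u₀)).sub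
          ((Real.hasDerivAt_sin v₀).const_mul (deriv x₄ u₀)))
        simpa [mul_comm, sub_eq_add_neg, Pi.add_def, Pi.neg_def] using this
      · have := (((Real.hasDerivAt_sin v₀).const_mul (deriv x₃ u₀)).add
          ((Real.hasDerivAt_cos v₀).const_mul (deriv x₄ u₀)))
        simpa [mul_comm, sub_eq_add_neg, Pi.add_def, Pi.neg_def] using this
    rw [h.deriv]
    simp only [Matrix.cons_val_two, Matrix.tail_cons, Matrix.head_cons]
    rw [hd3u, hd4u, hcos, hsin]
    have hsc : s ^ 2 + c ^ 2 = 1 := by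
      rw [hs, hc]; exact Real.sin_sq_add_cos_sq (φ u₀)
    linear_combination (-p) * hsc
  intro a b hcontra
  have h2 := congrFun hcontra 2
  simp only [Pi.add_apply, Pi.smul_apply, smul_eq_mul] at h2
  rw [hXuv2, hXu2, hXv2] at h2
  simp at h2
  exact hp h2
end

section
/- Let X be the Case II knotted sphere with x₄ = λ·x₃, x₃(u) > 0 and x₃'(u) ≠ 0 for all u, and unit-speed profile curve. Then the Christoffel symbols satisfy Γ¹₁₂ = −F·G_u/(2W²) = 0 and Γ²₁₂ = G_u/(2W²) = x₃'(u)/x₃(u), and the Laplace transform X₋₁ = X − (1/Γ²₁₂)·X_u equals X₋₁(u,v) = ( x₁(u) − (x₃(u)/x₃'(u))·x₁'(u), x₂(u) − (x₃(u)/x₃'(u))·x₂'(u), 0, 0 ); in particular X₋₁ lies in the rotation plane Π = { x ∈ ℝ⁴ : x₃ = x₄ = 0 }. -/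
open Real

lemma hasDerivAt_vec4_s13 {f g h k : ℝ → ℝ} {f' g' h' k' u : ℝ}
    (hf : HasDerivAt f f' u) (hg : HasDerivAt g g' u)
    (hh : HasDerivAt h h' u) (hk : HasDerivAt k k' u) :
    HasDerivAt (fun t => ![f t, g t, h t, k t]) ![f', g', h', k'] u := by
  rw [hasDerivAt_pi]
  intro i
  fin_cases i <;> simpa

theorem caseII_laplace_transform_in_rotation_plane
    (x₁ x₂ x₃ x₄ : ℝ → ℝ)
    (hx₁ : ContDiff ℝ (⊤ : ℕ∞) x₁) (hx₂ : ContDiff ℝ (⊤ : ℕ∞) x₂)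
    (hx₃ : ContDiff ℝ (⊤ : ℕ∞) x₃) (hx₄ : ContDiff ℝ (⊤ : ℕ∞) x₄)
    (hunit : ∀ u, deriv x₁ u ^ 2 + deriv x₂ u ^ 2 + deriv x₃ u ^ 2 + deriv x₄ u ^ 2 = 1)
    (X : ℝ → ℝ → Fin 4 → ℝ)
    (hX : ∀ u v, X u v =
      ![x₁ u, x₂ u, x₃ u * Real.cos v - x₄ u * Real.sin v,
        x₃ u * Real.sin v + x₄ u * Real.cos v])
    (Xu Xv : ℝ → ℝ → Fin 4 → ℝ)
    (hXu : ∀ u v, Xu u v = deriv (fun t => X t v) u)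
    (hXv : ∀ u v, Xv u v = deriv (fun t => X u t) v)
    (lam : ℝ) (hx₄lam : ∀ u, x₄ u = lam * x₃ u)
    (hx₃pos : ∀ u, x₃ u > 0)
    (hx₃' : ∀ u, deriv x₃ u ≠ 0)
    (E F G W : ℝ → ℝ → ℝ)
    (hE : ∀ u v, E u v = dot4 (Xu u v) (Xu u v))
    (hF : ∀ u v, F u v = dot4 (Xu u v) (Xv u v))
    (hG : ∀ u v, G u v = dot4 (Xv u v) (Xv u v))
    (hW : ∀ u v, W u v = Real.sqrt (E u v * G u v - F u v ^ 2))
    (Gu : ℝ → ℝ → ℝ)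
    (hGu : ∀ u v, Gu u v = deriv (fun t => G t v) u)
    (Γ₁ Γ₂ : ℝ → ℝ → ℝ)
    (hΓ₁ : ∀ u v, Γ₁ u v = -(F u v * Gu u v) / (2 * W u v ^ 2))
    (hΓ₂ : ∀ u v, Γ₂ u v = Gu u v / (2 * W u v ^ 2))
    (Xm : ℝ → ℝ → Fin 4 → ℝ)
    (hXm : ∀ u v, Xm u v = X u v - (1 / Γ₂ u v) • Xu u v)
    : ∀ u v,
      Γ₁ u v = 0 ∧
      Γ₂ u v = deriv x₃ u / x₃ u ∧
      Xm u v = ![x₁ u - (x₃ u / deriv x₃ u) * deriv x₁ u,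
                 x₂ u - (x₃ u / deriv x₃ u) * deriv x₂ u, 0, 0] ∧
      Xm u v 2 = 0 ∧ Xm u v 3 = 0 := by
  have d1 : ∀ t, HasDerivAt x₁ (deriv x₁ t) t :=
    fun t => (hx₁.differentiable (by simp) t).hasDerivAt
  have d2 : ∀ t, HasDerivAt x₂ (deriv x₂ t) t :=
    fun t => (hx₂.differentiable (by simp) t).hasDerivAt
  have d3 : ∀ t, HasDerivAt x₃ (deriv x₃ t) t :=
    fun t => (hx₃.differentiable (by simp) t).hasDerivAt
  have d4 : ∀ t, HasDerivAt x₄ (deriv x₄ t) t :=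
    fun t => (hx₄.differentiable (by simp) t).hasDerivAt
  have hd4 : ∀ t, deriv x₄ t = lam * deriv x₃ t := by
    intro t
    have hfe : x₄ = fun s => lam * x₃ s := funext hx₄lam
    rw [hfe]
    exact (((d3 t).const_mul lam)).deriv
  -- Xu formula
  have hXu' : ∀ t w, Xu t w = ![deriv x₁ t, deriv x₂ t,
      deriv x₃ t * Real.cos w - deriv x₄ t * Real.sin w,
      deriv x₃ t * Real.sin w + deriv x₄ t * Real.cos w] := by
    intro t w
    rw [hXu]
    have heq : (fun s => X s w) = fun s => ![x₁ s, x₂ s,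
        x₃ s * Real.cos w - x₄ s * Real.sin w,
        x₃ s * Real.sin w + x₄ s * Real.cos w] := funext fun s => hX s w
    rw [heq]
    exact (hasDerivAt_vec4_s13 (d1 t) (d2 t)
      (((d3 t).mul_const _).sub ((d4 t).mul_const _))
      (((d3 t).mul_const _).add ((d4 t).mul_const _))).deriv
  -- Xv formula
  have hXv' : ∀ t w, Xv t w = ![0, 0,
      x₃ t * -Real.sin w - x₄ t * Real.cos w,
      x₃ t * Real.cos w + x₄ t * -Real.sin w] := by
    intro t w
    rw [hXv]
    have heq : (fun s => X t s) = fun s => ![x₁ t, x₂ t,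
        x₃ t * Real.cos s - x₄ t * Real.sin s,
        x₃ t * Real.sin s + x₄ t * Real.cos s] := funext fun s => hX t s
    rw [heq]
    exact (hasDerivAt_vec4_s13 (hasDerivAt_const w (x₁ t)) (hasDerivAt_const w (x₂ t))
      ((((Real.hasDerivAt_cos w).const_mul (x₃ t))).sub
        (((Real.hasDerivAt_sin w).const_mul (x₄ t))))
      ((((Real.hasDerivAt_sin w).const_mul (x₃ t))).add
        (((Real.hasDerivAt_cos w).const_mul (x₄ t))))).deriv
  -- G formula
  have hG' : ∀ t w, G t w = (1 + lam ^ 2) * x₃ t ^ 2 := by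
    intro t w
    rw [hG, hXv', dot4]
    simp only [Matrix.cons_val_zero, Matrix.cons_val_one, Matrix.head_cons,
      Matrix.cons_val_two, Matrix.tail_cons, Matrix.cons_val_three, hx₄lam]
    have hsc := Real.sin_sq_add_cos_sq w
    nlinarith [hsc]
  intro u v
  -- F value
  have hF0 : F u v = 0 := by
    rw [hF, hXu', hXv', dot4]
    simp only [Matrix.cons_val_zero, Matrix.cons_val_one, Matrix.head_cons,
      Matrix.cons_val_two, Matrix.tail_cons, Matrix.cons_val_three, hx₄lam, hd4]
    ring
  -- E value
  have hE1 : E u v = 1 := by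
    rw [hE, hXu', dot4]
    simp only [Matrix.cons_val_zero, Matrix.cons_val_one, Matrix.head_cons,
      Matrix.cons_val_two, Matrix.tail_cons, Matrix.cons_val_three]
    have hsc := Real.sin_sq_add_cos_sq v
    nlinarith [hsc, hunit u]
  -- Gu value
  have hGu' : Gu u v = (1 + lam ^ 2) * (2 * x₃ u * deriv x₃ u) := by
    rw [hGu]
    have heq : (fun t => G t v) = fun t => (1 + lam ^ 2) * x₃ t ^ 2 :=
      funext fun t => hG' t v
    rw [heq]
    have : HasDerivAt (fun t => (1 + lam ^ 2) * x₃ t ^ 2)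
        ((1 + lam ^ 2) * (2 * x₃ u * deriv x₃ u)) u := by
      have := ((d3 u).pow 2).const_mul (1 + lam ^ 2)
      simpa [mul_comm, mul_assoc, mul_left_comm] using this
    exact this.deriv
  have hlp : (0:ℝ) < 1 + lam ^ 2 := by positivity
  have hx3 := hx₃pos u
  have hW2 : W u v ^ 2 = (1 + lam ^ 2) * x₃ u ^ 2 := by
    rw [hW, hE1, hF0, hG' u v]
    rw [Real.sq_sqrt (by nlinarith)]
    ring
  have hΓ₂' : Γ₂ u v = deriv x₃ u / x₃ u := by
    rw [hΓ₂, hGu', hW2]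
    field_simp
  have hne := hx₃' u
  refine ⟨?_, hΓ₂', ?_, ?_, ?_⟩
  · rw [hΓ₁, hF0]; ring
  · rw [hXm, hΓ₂', hX, hXu']
    funext i
    fin_cases i <;>
      simp only [Pi.sub_apply, Pi.smul_apply, smul_eq_mul, Matrix.cons_val_zero,
        Matrix.cons_val_one, Matrix.head_cons, Matrix.cons_val_two, Matrix.tail_cons,
        Matrix.cons_val_three, one_div, hx₄lam, hd4, Fin.reduceFinMk, Matrix.cons_val]
    · field_simp
    · field_simp
    · field_simp [hne]; ring
    · field_simp [hne]; ring
  · rw [hXm, hΓ₂', hX, hXu']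
    simp only [Pi.sub_apply, Pi.smul_apply, smul_eq_mul, Matrix.cons_val_zero,
      Matrix.cons_val_one, Matrix.head_cons, Matrix.cons_val_two, Matrix.tail_cons,
      Matrix.cons_val_three, one_div, hx₄lam, hd4]
    field_simp [hne]; ring
  · rw [hXm, hΓ₂', hX, hXu']
    simp only [Pi.sub_apply, Pi.smul_apply, smul_eq_mul, Matrix.cons_val_zero,
      Matrix.cons_val_one, Matrix.head_cons, Matrix.cons_val_two, Matrix.tail_cons,
      Matrix.cons_val_three, one_div, hx₄lam, hd4]
    field_simp [hne]; ring
end
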